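/- arXiv:0801.4544 — 4 statements merged into one kernel-verified Lean document; each statement's English description precedes it below -/
import Mathlib

section
/- For every continuous nondecreasing function F : ℝ → ℝ, every rate R ∈ ℝ, every input pmf p_X and every channel p_{Y|X}, the modified random-coding exponent is related to the sphere-packing exponent by E_{r,F}(R, p_X, p_{Y|X}) = inf_{R' ∈ ℝ} [ E_sp(R', p_X, p_{Y|X}) + F(R' − R) ] (with the convention that the bracketed expression is +∞ whenever E_sp(R', p_X, p_{Y|X}) = +∞). -/
open scoped BigOperators

section Defs

variable {𝒳 𝒴 : Type*} [Fintype 𝒳] [Fintype 𝒴]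

/-- `p` is a probability mass function on the finite alphabet `𝒳`. -/
def IsPMF (p : 𝒳 → ℝ) : Prop := (∀ x, 0 ≤ p x) ∧ ∑ x, p x = 1

/-- A channel assigns to each input letter a pmf on `𝒴`. -/
def IsChannel (W : 𝒳 → 𝒴 → ℝ) : Prop := ∀ x, IsPMF (W x)

/-- Conditional Kullback–Leibler divergence `D(q ‖ W | pX)`, base-2 logarithms. -/
noncomputable def condKL (pX : 𝒳 → ℝ) (q W : 𝒳 → 𝒴 → ℝ) : ℝ :=
  ∑ x, ∑ y, pX x * q x y * Real.logb 2 (q x y / W x y)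

/-- Mutual information `I(pX, q)` of the joint pmf `(x, y) ↦ pX x * q x y`. -/
noncomputable def mutInfo (pX : 𝒳 → ℝ) (q : 𝒳 → 𝒴 → ℝ) : ℝ :=
  ∑ x, ∑ y, pX x * q x y * Real.logb 2 (q x y / ∑ x', pX x' * q x' y)

/-- Modified random-coding exponent `E_{r,F}(R, pX, W)`. -/
noncomputable def ErF (F : ℝ → ℝ) (R : ℝ) (pX : 𝒳 → ℝ) (W : 𝒳 → 𝒴 → ℝ) : ℝ :=
  sInf {v : ℝ | ∃ q : 𝒳 → 𝒴 → ℝ, IsChannel q ∧ v = condKL pX q W + F (mutInfo pX q - R)}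

/-- Sphere-packing exponent `E_sp(R, pX, W)`, with value `+∞` if no conditional pmf
satisfies the mutual-information constraint. -/
noncomputable def EspE (R : ℝ) (pX : 𝒳 → ℝ) (W : 𝒳 → 𝒴 → ℝ) : EReal :=
  sInf {v : EReal | ∃ q : 𝒳 → 𝒴 → ℝ,
    IsChannel q ∧ mutInfo pX q ≤ R ∧ v = (condKL pX q W : EReal)}

/-- `E_{r,F}` for a class of channels (infimum over the class). -/
noncomputable def ErFW (F : ℝ → ℝ) (R : ℝ) (pX : 𝒳 → ℝ) (𝒲 : Set (𝒳 → 𝒴 → ℝ)) : ℝ :=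
  sInf {v : ℝ | ∃ p ∈ 𝒲, v = ErF F R pX p}

/-- `E_sp` for a class of channels (infimum over the class). -/
noncomputable def EspEW (R : ℝ) (pX : 𝒳 → ℝ) (𝒲 : Set (𝒳 → 𝒴 → ℝ)) : EReal :=
  sInf {v : EReal | ∃ p ∈ 𝒲, v = EspE R pX p}

end Defs

/-!
Both sides are infima of `D(q‖W|pX) + F(I(pX,q) − R)`: on the right, a conditional pmf `q`
enters for every rate `R' ≥ I(pX,q)`, and since `F` is nondecreasing the rate `R' = I(pX,q)`
is the best one. The real `sInf` defining `E_{r,F}` is a true infimum rather than Lean's junk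
value `0` because the set is bounded below: both `D` and `I` are at least `-1/ln 2`.
-/

open Real

/-- With Lean's `log 0 = 0`, the term for `w = 0 < a` vanishes instead of being `+∞`; this is
why conditional divergences of pmfs are only bounded below by `-1/ln 2` rather than by `0`. -/
lemma neg_le_mul_log_div {a w : ℝ} (ha : 0 ≤ a) (hw : 0 ≤ w) : -w ≤ a * log (a / w) := by
  rcases ha.eq_or_lt with rfl | ha
  · simpa using hw
  rcases hw.eq_or_lt with rfl | hw
  · simp
  have h := one_sub_inv_le_log_of_pos (div_pos ha hw)
  rw [inv_div] at h
  calc -w ≤ a * (1 - w / a) := by field_simp; linarith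
    _ ≤ a * log (a / w) := mul_le_mul_of_nonneg_left h ha.le

section Information

variable {𝒳 𝒴 : Type*} [Fintype 𝒳] [Fintype 𝒴] {pX : 𝒳 → ℝ} {q W : 𝒳 → 𝒴 → ℝ}

lemma neg_inv_log_two_le_condKL (hpX : IsPMF pX) (hq : IsChannel q) (hW : IsChannel W) :
    -(log 2)⁻¹ ≤ condKL pX q W := by
  calc -(log 2)⁻¹ = ∑ x, ∑ y, pX x * -W x y / log 2 := by
        simp only [mul_neg, neg_div, Finset.sum_neg_distrib, ← Finset.sum_div, ← Finset.mul_sum,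
          (hW _).2, mul_one, hpX.2, one_div]
    _ ≤ condKL pX q W := by
        refine Finset.sum_le_sum fun x _ => Finset.sum_le_sum fun y _ => ?_
        rw [logb, mul_assoc, mul_div_assoc', mul_div_assoc']
        exact div_le_div_of_nonneg_right (mul_le_mul_of_nonneg_left
          (neg_le_mul_log_div ((hq x).1 y) ((hW x).1 y)) (hpX.1 x)) (log_nonneg one_le_two)

def outputPMF (pX : 𝒳 → ℝ) (q : 𝒳 → 𝒴 → ℝ) (y : 𝒴) : ℝ := ∑ x, pX x * q x y

lemma IsPMF.outputPMF (hpX : IsPMF pX) (hq : IsChannel q) : IsPMF (outputPMF pX q) := by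
  refine ⟨fun y => Finset.sum_nonneg fun x _ => mul_nonneg (hpX.1 x) ((hq x).1 y), ?_⟩
  simp only [_root_.outputPMF]
  rw [Finset.sum_comm]
  simp only [← Finset.mul_sum, (hq _).2, mul_one, hpX.2]

lemma mutInfo_eq_condKL_outputPMF :
    mutInfo pX q = condKL pX q (fun _ => outputPMF pX q) := rfl

lemma neg_inv_log_two_le_mutInfo (hpX : IsPMF pX) (hq : IsChannel q) :
    -(log 2)⁻¹ ≤ mutInfo pX q := by
  rw [mutInfo_eq_condKL_outputPMF]
  exact neg_inv_log_two_le_condKL hpX hq fun _ => hpX.outputPMF hq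

end Information

lemma EReal.le_coe_csInf {s : Set ℝ} (hs : s.Nonempty) {b : EReal}
    (h : ∀ v ∈ s, b ≤ v) : b ≤ ((sInf s : ℝ) : EReal) := by
  induction b using EReal.rec with
  | bot => exact bot_le
  | coe r =>
    exact EReal.coe_le_coe_iff.2 (le_csInf hs fun v hv => EReal.coe_le_coe_iff.1 (h v hv))
  | top =>
    obtain ⟨v, hv⟩ := hs
    exact absurd (h v hv) (by simp)

section Exponents

variable {𝒳 𝒴 : Type*} [Fintype 𝒳] [Fintype 𝒴] {pX : 𝒳 → ℝ} {q W : 𝒳 → 𝒴 → ℝ}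
  {F : ℝ → ℝ} {R : ℝ}

lemma bddBelow_ErF_set (hpX : IsPMF pX) (hW : IsChannel W) (hF : Monotone F) :
    BddBelow
      {v : ℝ | ∃ q : 𝒳 → 𝒴 → ℝ, IsChannel q ∧ v = condKL pX q W + F (mutInfo pX q - R)} := by
  refine ⟨-(log 2)⁻¹ + F (-(log 2)⁻¹ - R), ?_⟩
  rintro v ⟨q, hq, rfl⟩
  have hF' := hF (sub_le_sub_right (neg_inv_log_two_le_mutInfo hpX hq) R)
  linarith [neg_inv_log_two_le_condKL hpX hq hW]

lemma ErF_le (hpX : IsPMF pX) (hW : IsChannel W) (hF : Monotone F) (hq : IsChannel q) :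
    ErF F R pX W ≤ condKL pX q W + F (mutInfo pX q - R) :=
  csInf_le (bddBelow_ErF_set hpX hW hF) ⟨q, hq, rfl⟩

lemma le_coe_ErF {b : EReal} (hW : IsChannel W)
    (h : ∀ q, IsChannel q → b ≤ ((condKL pX q W + F (mutInfo pX q - R) : ℝ) : EReal)) :
    b ≤ ErF F R pX W := by
  refine EReal.le_coe_csInf ?_ ?_
  · exact ⟨_, W, hW, rfl⟩
  · rintro _ ⟨q, hq, rfl⟩
    exact h q hq

lemma EspE_le_condKL {R' : ℝ} (hq : IsChannel q) (hR' : mutInfo pX q ≤ R') :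
    EspE R' pX W ≤ condKL pX q W :=
  sInf_le ⟨q, hq, hR', rfl⟩

lemma coe_ErF_le_EspE_add (hpX : IsPMF pX) (hW : IsChannel W) (hF : Monotone F) (R' : ℝ) :
    (ErF F R pX W : EReal) ≤ EspE R' pX W + (F (R' - R) : EReal) := by
  have hle : ((ErF F R pX W - F (R' - R) : ℝ) : EReal) ≤ EspE R' pX W := by
    refine le_sInf ?_
    rintro _ ⟨q, hq, hqR', rfl⟩
    have := ErF_le (R := R) hpX hW hF hq
    have := hF (sub_le_sub_right hqR' R)
    exact EReal.coe_le_coe_iff.2 (by linarith)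
  calc (ErF F R pX W : EReal)
        = ((ErF F R pX W - F (R' - R) : ℝ) : EReal) + (F (R' - R) : EReal) := by
        rw [← EReal.coe_add, sub_add_cancel]
    _ ≤ EspE R' pX W + (F (R' - R) : EReal) := by gcongr

lemma iInf_EspE_add_le (hq : IsChannel q) :
    ⨅ R' : ℝ, (EspE R' pX W + (F (R' - R) : EReal)) ≤
      ((condKL pX q W + F (mutInfo pX q - R) : ℝ) : EReal) :=
  calc ⨅ R' : ℝ, (EspE R' pX W + (F (R' - R) : EReal))
      ≤ EspE (mutInfo pX q) pX W + (F (mutInfo pX q - R) : EReal) := iInf_le _ _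
    _ ≤ (condKL pX q W : EReal) + (F (mutInfo pX q - R) : EReal) := by
        gcongr
        exact EspE_le_condKL hq le_rfl
    _ = _ := (EReal.coe_add _ _).symm

end Exponents

theorem ErF_eq_inf_Esp_general {𝒳 𝒴 : Type*} [Fintype 𝒳] [Fintype 𝒴]
    (pX : 𝒳 → ℝ) (hpX : IsPMF pX) (W : 𝒳 → 𝒴 → ℝ) (hW : IsChannel W)
    (F : ℝ → ℝ) (hFmono : Monotone F) (R : ℝ) :
    (ErF F R pX W : EReal) = ⨅ R' : ℝ, (EspE R' pX W + (F (R' - R) : EReal)) :=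
  le_antisymm (le_iInf fun R' => coe_ErF_le_EspE_add hpX hW hFmono R')
    (le_coe_ErF hW fun _ hq => iInf_EspE_add_le hq)

/-- For every continuous nondecreasing `F`, every rate `R`, input pmf `pX`
and channel `W`, `E_{r,F}(R,pX,W) = inf_{R'} [E_sp(R',pX,W) + F(R'-R)]`, where the
bracketed expression is `+∞` whenever `E_sp(R',pX,W) = +∞` (computation in `EReal`). -/
theorem ErF_eq_inf_Esp {𝒳 𝒴 : Type*} [Fintype 𝒳] [Fintype 𝒴]
    (pX : 𝒳 → ℝ) (hpX : IsPMF pX) (W : 𝒳 → 𝒴 → ℝ) (hW : IsChannel W)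
    (F : ℝ → ℝ) (hFcont : Continuous F) (hFmono : Monotone F) (R : ℝ) :
    (ErF F R pX W : EReal) = ⨅ R' : ℝ, (EspE R' pX W + (F (R' - R) : EReal)) :=
  ErF_eq_inf_Esp_general pX hpX W hW F hFmono R
end

section
/- Let W be a nonempty compact set of channels each of which has strictly positive transition probabilities (so that E_sp(R', p_X, W) is finite for all R' ≥ 0, and the function R' ↦ E_sp(R', p_X, W) is nonincreasing and continuous). Fix R ≥ 0 and define F_{R,p_X,W}(t) = E_sp(R, p_X, W) − E_sp(R+t, p_X, W) for t ≥ −R. Then F_{R,p_X,W} is nondecreasing and continuous, and E_{r,F_{R,p_X,W}}(R, p_X, W) = E_sp(R, p_X, W). -/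
open scoped BigOperators

/-!
For `p ∈ 𝒲` and any conditional pmf `q`, the channel `q` itself is feasible in the definition of
`E_sp(I(pX, q), pX, p)`, so `D(q ‖ p | pX) ≥ E_sp(I(pX, q), pX, 𝒲)`. Hence
`D(q ‖ p | pX) + F(I(pX, q) - R) ≥ E_sp(R, pX, 𝒲)` for every `q`, with equality at `q = p`, where
`D(p ‖ p | pX) = 0` and hence, by Gibbs' inequality, `E_sp(I(pX, p), pX, 𝒲) = 0`. So every `p ∈ 𝒲`
has `E_{r,F}(R, pX, p) = E_sp(R, pX, 𝒲)`. Monotonicity and continuity of `F` are inherited from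
`E_sp(·, pX, 𝒲)` through the shift `t ↦ R + t`, which maps `[-R, ∞)` into `[0, ∞)`.
-/

lemma sub_le_mul_log_div {q p : ℝ} (hq : 0 ≤ q) (hp : 0 < p) :
    q - p ≤ q * Real.log (q / p) := by
  have h := Real.self_sub_one_le_mul_log (div_nonneg hq hp.le)
  calc q - p = p * (q / p - 1) := by field_simp
    _ ≤ p * (q / p * Real.log (q / p)) := mul_le_mul_of_nonneg_left h hp.le
    _ = q * Real.log (q / p) := by field_simp

theorem sum_mul_logb_div_nonneg {ι : Type*} (s : Finset ι) {q p : ι → ℝ}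
    (hq : ∀ i ∈ s, 0 ≤ q i) (hp : ∀ i ∈ s, 0 < p i) (hsum : ∑ i ∈ s, p i ≤ ∑ i ∈ s, q i) :
    0 ≤ ∑ i ∈ s, q i * Real.logb 2 (q i / p i) := by
  have hlog : ∑ i ∈ s, (q i - p i) ≤ ∑ i ∈ s, q i * Real.log (q i / p i) :=
    Finset.sum_le_sum fun i hi => sub_le_mul_log_div (hq i hi) (hp i hi)
  rw [Finset.sum_sub_distrib] at hlog
  simp only [Real.logb, ← mul_div_assoc, ← Finset.sum_div]
  exact div_nonneg (by linarith) (Real.log_nonneg one_le_two)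

section Exponents

variable {𝒳 𝒴 : Type*} [Fintype 𝒳] [Fintype 𝒴] {pX : 𝒳 → ℝ}

theorem condKL_nonneg (hpX : ∀ x, 0 ≤ pX x) {q p : 𝒳 → 𝒴 → ℝ} (hq : IsChannel q)
    (hp : IsChannel p) (hpos : ∀ x y, 0 < p x y) : 0 ≤ condKL pX q p := by
  refine Finset.sum_nonneg fun x _ => ?_
  simp only [mul_assoc, ← Finset.mul_sum]
  refine mul_nonneg (hpX x) (sum_mul_logb_div_nonneg _ (fun y _ => (hq x).1 y)
    (fun y _ => hpos x y) ?_)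
  rw [(hp x).2, (hq x).2]

@[simp]
theorem condKL_self (pX : 𝒳 → ℝ) (p : 𝒳 → 𝒴 → ℝ) : condKL pX p p = 0 := by
  refine Finset.sum_eq_zero fun x _ => Finset.sum_eq_zero fun y _ => ?_
  rcases eq_or_ne (p x y) 0 with h | h <;> simp [h]

theorem EspEW_nonneg (hpX : ∀ x, 0 ≤ pX x) {𝒲 : Set (𝒳 → 𝒴 → ℝ)}
    (h𝒲ch : ∀ p ∈ 𝒲, IsChannel p) (h𝒲pos : ∀ p ∈ 𝒲, ∀ x y, 0 < p x y) (R : ℝ) :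
    0 ≤ EspEW R pX 𝒲 := by
  refine le_sInf ?_
  rintro _ ⟨p, hp, rfl⟩
  refine le_sInf ?_
  rintro _ ⟨q, hq, -, rfl⟩
  exact EReal.coe_nonneg.mpr (condKL_nonneg hpX hq (h𝒲ch p hp) (h𝒲pos p hp))

theorem EspEW_mutInfo_le_condKL {𝒲 : Set (𝒳 → 𝒴 → ℝ)} {p : 𝒳 → 𝒴 → ℝ} (hp : p ∈ 𝒲)
    {q : 𝒳 → 𝒴 → ℝ} (hq : IsChannel q) : EspEW (mutInfo pX q) pX 𝒲 ≤ condKL pX q p :=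
  calc EspEW (mutInfo pX q) pX 𝒲 ≤ EspE (mutInfo pX q) pX p := sInf_le ⟨p, hp, rfl⟩
    _ ≤ condKL pX q p := sInf_le ⟨q, hq, le_rfl, rfl⟩

theorem toReal_EspEW_mutInfo_le_condKL (hpX : ∀ x, 0 ≤ pX x) {𝒲 : Set (𝒳 → 𝒴 → ℝ)}
    (h𝒲ch : ∀ p ∈ 𝒲, IsChannel p) (h𝒲pos : ∀ p ∈ 𝒲, ∀ x y, 0 < p x y)
    {p : 𝒳 → 𝒴 → ℝ} (hp : p ∈ 𝒲) {q : 𝒳 → 𝒴 → ℝ} (hq : IsChannel q) :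
    (EspEW (mutInfo pX q) pX 𝒲).toReal ≤ condKL pX q p := by
  have h0 := EspEW_nonneg hpX h𝒲ch h𝒲pos (mutInfo pX q)
  simpa using EReal.toReal_le_toReal (EspEW_mutInfo_le_condKL hp hq)
    (ne_bot_of_le_ne_bot EReal.zero_ne_bot h0) (EReal.coe_ne_top _)

theorem EspEW_mutInfo_self_eq_zero (hpX : ∀ x, 0 ≤ pX x) {𝒲 : Set (𝒳 → 𝒴 → ℝ)}
    (h𝒲ch : ∀ p ∈ 𝒲, IsChannel p) (h𝒲pos : ∀ p ∈ 𝒲, ∀ x y, 0 < p x y)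
    {p : 𝒳 → 𝒴 → ℝ} (hp : p ∈ 𝒲) : EspEW (mutInfo pX p) pX 𝒲 = 0 :=
  le_antisymm (by simpa using EspEW_mutInfo_le_condKL (pX := pX) hp (h𝒲ch p hp))
    (EspEW_nonneg hpX h𝒲ch h𝒲pos _)

theorem ErF_const_sub_EspEW (hpX : ∀ x, 0 ≤ pX x) {𝒲 : Set (𝒳 → 𝒴 → ℝ)}
    (h𝒲ch : ∀ p ∈ 𝒲, IsChannel p) (h𝒲pos : ∀ p ∈ 𝒲, ∀ x y, 0 < p x y)
    {p : 𝒳 → 𝒴 → ℝ} (hp : p ∈ 𝒲) (c R : ℝ) :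
    ErF (fun t => c - (EspEW (R + t) pX 𝒲).toReal) R pX p = c := by
  refine IsLeast.csInf_eq ⟨⟨p, h𝒲ch p hp, ?_⟩, ?_⟩
  · simp [EspEW_mutInfo_self_eq_zero hpX h𝒲ch h𝒲pos hp]
  · rintro _ ⟨q, hq, rfl⟩
    have := toReal_EspEW_mutInfo_le_condKL hpX h𝒲ch h𝒲pos hp hq
    simp only [add_sub_cancel]
    linarith

theorem ErFW_eq_of_forall_ErF_eq {F : ℝ → ℝ} {R c : ℝ} {𝒲 : Set (𝒳 → 𝒴 → ℝ)}
    (h𝒲ne : 𝒲.Nonempty) (h : ∀ p ∈ 𝒲, ErF F R pX p = c) : ErFW F R pX 𝒲 = c := by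
  have hset : {v : ℝ | ∃ p ∈ 𝒲, v = ErF F R pX p} = {c} := by
    ext v
    constructor
    · rintro ⟨p, hp, rfl⟩
      exact h p hp
    · rintro rfl
      obtain ⟨p, hp⟩ := h𝒲ne
      exact ⟨p, hp, (h p hp).symm⟩
  rw [ErFW, hset, csInf_singleton]

end Exponents

theorem FR_props_and_ErF_eq_Esp_general {𝒳 𝒴 : Type*} [Fintype 𝒳] [Fintype 𝒴]
    (pX : 𝒳 → ℝ) (hpX : IsPMF pX)
    (𝒲 : Set (𝒳 → 𝒴 → ℝ)) (h𝒲ne : 𝒲.Nonempty)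
    (h𝒲ch : ∀ p ∈ 𝒲, IsChannel p) (h𝒲pos : ∀ p ∈ 𝒲, ∀ x y, 0 < p x y)
    (hanti : AntitoneOn (fun R' : ℝ => (EspEW R' pX 𝒲).toReal) (Set.Ici 0))
    (hcont : ContinuousOn (fun R' : ℝ => (EspEW R' pX 𝒲).toReal) (Set.Ici 0))
    (R : ℝ) :
    MonotoneOn
        (fun t : ℝ => (EspEW R pX 𝒲).toReal - (EspEW (R + t) pX 𝒲).toReal)
        (Set.Ici (-R))
      ∧ ContinuousOn
        (fun t : ℝ => (EspEW R pX 𝒲).toReal - (EspEW (R + t) pX 𝒲).toReal)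
        (Set.Ici (-R))
      ∧ ErFW (fun t : ℝ => (EspEW R pX 𝒲).toReal - (EspEW (R + t) pX 𝒲).toReal) R pX 𝒲
          = (EspEW R pX 𝒲).toReal := by
  have hshift : Set.MapsTo (fun t : ℝ => R + t) (Set.Ici (-R)) (Set.Ici 0) := fun t ht => by
    simp only [Set.mem_Ici] at ht ⊢
    linarith
  refine ⟨fun a ha b hb hab => ?_, ?_, ?_⟩
  · have := hanti (hshift ha) (hshift hb) (by simpa using hab)
    exact sub_le_sub_left this _
  · exact continuousOn_const.sub (hcont.comp (by fun_prop) hshift)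
  · exact ErFW_eq_of_forall_ErF_eq h𝒲ne fun p hp =>
      ErF_const_sub_EspEW hpX.1 h𝒲ch h𝒲pos hp _ R

/-- For a nonempty compact class `𝒲` of everywhere-positive channels
(so that `E_sp(R',pX,𝒲)` is finite for `R' ≥ 0`, nonincreasing and continuous), and
`R ≥ 0`, the function `F_{R,pX,𝒲}(t) = E_sp(R,pX,𝒲) - E_sp(R+t,pX,𝒲)` is nondecreasing
and continuous on `t ≥ -R`, and `E_{r,F_{R,pX,𝒲}}(R,pX,𝒲) = E_sp(R,pX,𝒲)`. -/
theorem FR_props_and_ErF_eq_Esp {𝒳 𝒴 : Type*} [Fintype 𝒳] [Fintype 𝒴]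
    (pX : 𝒳 → ℝ) (hpX : IsPMF pX)
    (𝒲 : Set (𝒳 → 𝒴 → ℝ)) (h𝒲ne : 𝒲.Nonempty) (h𝒲cpt : IsCompact 𝒲)
    (h𝒲ch : ∀ p ∈ 𝒲, IsChannel p) (h𝒲pos : ∀ p ∈ 𝒲, ∀ x y, 0 < p x y)
    (hfin : ∀ R' : ℝ, 0 ≤ R' → EspEW R' pX 𝒲 ≠ ⊤ ∧ EspEW R' pX 𝒲 ≠ ⊥)
    (hanti : AntitoneOn (fun R' : ℝ => (EspEW R' pX 𝒲).toReal) (Set.Ici 0))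
    (hcont : ContinuousOn (fun R' : ℝ => (EspEW R' pX 𝒲).toReal) (Set.Ici 0))
    (R : ℝ) (hR : 0 ≤ R) :
    MonotoneOn
        (fun t : ℝ => (EspEW R pX 𝒲).toReal - (EspEW (R + t) pX 𝒲).toReal)
        (Set.Ici (-R))
      ∧ ContinuousOn
        (fun t : ℝ => (EspEW R pX 𝒲).toReal - (EspEW (R + t) pX 𝒲).toReal)
        (Set.Ici (-R))
      ∧ ErFW (fun t : ℝ => (EspEW R pX 𝒲).toReal - (EspEW (R + t) pX 𝒲).toReal) R pX 𝒲
          = (EspEW R pX 𝒲).toReal :=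
  FR_props_and_ErF_eq_Esp_general pX hpX 𝒲 h𝒲ne h𝒲ch h𝒲pos hanti hcont R
end

section
/- Let W be a nonempty compact set of channels, p_X an input pmf, R ∈ ℝ and α ∈ ℝ, and define F^{L*}(t) = α − E_sp(R+t, p_X, W) (interpreted as −∞ when E_sp(R+t, p_X, W) = +∞). Then for every continuous nondecreasing F : ℝ → ℝ, one has E_{r,F}(R, p_X, W) ≥ α if and only if F(t) ≥ F^{L*}(t) for every t ∈ ℝ. In other words, the feasible set {F : E_{r,F}(R, p_X, W) ≥ α} consists exactly of those continuous nondecreasing F dominating F^{L*} pointwise. -/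
/-! Both sides reduce to one condition on pairs of a channel `p ∈ 𝒲` and a test channel `q`,
namely `α ≤ D(q‖p|pX) + F(I(pX,q) - R)`. The sphere-packing side imposes it for each `t` on the
pairs with `I(pX,q) ≤ R + t` with `F t` in place of `F(I(pX,q) - R)`; monotonicity of `F` gives one
direction and `t = I(pX,q) - R` the other. The real infima in `E_{r,F}` need sets bounded below:
even with the junk value `log 0 = 0`, divergence and mutual information stay above `-|𝒴| / log 2`. -/

open scoped BigOperators

open Real

lemma EReal.coe_sub_le_coe_iff {a b : ℝ} {x : EReal} :
    (a : EReal) - x ≤ b ↔ ((a - b : ℝ) : EReal) ≤ x := by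
  induction x with
  | bot => simp [-EReal.coe_sub]
  | coe x => norm_cast; constructor <;> intro h <;> linarith
  | top => simp

lemma IsPMF.le_one {ι : Type*} [Fintype ι] {p : ι → ℝ} (hp : IsPMF p) (i : ι) : p i ≤ 1 :=
  hp.2 ▸ Finset.single_le_sum (fun j _ => hp.1 j) (Finset.mem_univ i)

lemma neg_one_le_mul_log_div {q w : ℝ} (hq : 0 ≤ q) (hw₀ : 0 ≤ w) (hw₁ : w ≤ 1) :
    -1 ≤ q * log (q / w) := by
  rcases hw₀.eq_or_lt with rfl | hw
  · simp
  rcases hq.eq_or_lt with rfl | hq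
  · simp
  calc -1 ≤ q - 1 := by linarith
    _ ≤ q * log q := self_sub_one_le_mul_log hq.le
    _ ≤ q * log (q / w) := by gcongr; exact le_div_self hq.le hw hw₁

lemma neg_inv_log_two_le_mul_logb_div {q w : ℝ} (hq : 0 ≤ q) (hw₀ : 0 ≤ w) (hw₁ : w ≤ 1) :
    -(log 2)⁻¹ ≤ q * logb 2 (q / w) := by
  calc -(log 2)⁻¹ = -1 / log 2 := by ring
    _ ≤ q * log (q / w) / log 2 := by gcongr; exact neg_one_le_mul_log_div hq hw₀ hw₁
    _ = q * logb 2 (q / w) := by rw [logb, mul_div_assoc]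

section
variable {𝒳 𝒴 : Type*} [Fintype 𝒳] [Fintype 𝒴] {F : ℝ → ℝ} {R : ℝ} {pX : 𝒳 → ℝ}

lemma neg_card_div_log_two_le_sum_mul_logb {b c : 𝒳 → 𝒴 → ℝ} (hpX : IsPMF pX)
    (hb : ∀ x y, 0 ≤ b x y) (hc₀ : ∀ x y, 0 ≤ c x y) (hc₁ : ∀ x y, c x y ≤ 1) :
    -(Fintype.card 𝒴 / log 2) ≤ ∑ x, ∑ y, pX x * b x y * logb 2 (b x y / c x y) := by
  calc -(Fintype.card 𝒴 / log 2) = ∑ x, ∑ _y : 𝒴, pX x * -(log 2)⁻¹ := by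
        simp only [Finset.sum_const, Finset.card_univ, nsmul_eq_mul, ← Finset.mul_sum,
          ← Finset.sum_mul, hpX.2]
        ring
    _ ≤ ∑ x, ∑ y, pX x * b x y * logb 2 (b x y / c x y) := by
        refine Finset.sum_le_sum fun x _ => Finset.sum_le_sum fun y _ => ?_
        rw [mul_assoc]
        exact mul_le_mul_of_nonneg_left
          (neg_inv_log_two_le_mul_logb_div (hb x y) (hc₀ x y) (hc₁ x y)) (hpX.1 x)

lemma neg_card_div_log_two_le_condKL {q W : 𝒳 → 𝒴 → ℝ} (hpX : IsPMF pX)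
    (hq : IsChannel q) (hW : IsChannel W) : -(Fintype.card 𝒴 / log 2) ≤ condKL pX q W :=
  neg_card_div_log_two_le_sum_mul_logb hpX (fun x y => (hq x).1 y) (fun x y => (hW x).1 y)
    (fun x y => (hW x).le_one y)

lemma neg_card_div_log_two_le_mutInfo {q : 𝒳 → 𝒴 → ℝ} (hpX : IsPMF pX)
    (hq : IsChannel q) : -(Fintype.card 𝒴 / log 2) ≤ mutInfo pX q := by
  refine neg_card_div_log_two_le_sum_mul_logb hpX (fun x y => (hq x).1 y)
    (fun _ y => Finset.sum_nonneg fun x _ => mul_nonneg (hpX.1 x) ((hq x).1 y)) fun _ y => ?_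
  calc ∑ x, pX x * q x y ≤ ∑ x, pX x :=
        Finset.sum_le_sum fun x _ => mul_le_of_le_one_right (hpX.1 x) ((hq x).le_one y)
    _ = 1 := hpX.2

lemma exists_le_condKL_add (hF : Monotone F) (hpX : IsPMF pX) :
    ∃ c, ∀ q W : 𝒳 → 𝒴 → ℝ, IsChannel q → IsChannel W →
      c ≤ condKL pX q W + F (mutInfo pX q - R) := by
  refine ⟨-(Fintype.card 𝒴 / log 2) + F (-(Fintype.card 𝒴 / log 2) - R), fun q W hq hW => ?_⟩
  have hI := neg_card_div_log_two_le_mutInfo hpX hq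
  exact add_le_add (neg_card_div_log_two_le_condKL hpX hq hW) (hF (by linarith))

lemma le_ErF_iff (hF : Monotone F) (hpX : IsPMF pX) {W : 𝒳 → 𝒴 → ℝ} (hW : IsChannel W)
    {α : ℝ} : α ≤ ErF F R pX W ↔
      ∀ q, IsChannel q → α ≤ condKL pX q W + F (mutInfo pX q - R) := by
  obtain ⟨c, hc⟩ := exists_le_condKL_add (𝒴 := 𝒴) (R := R) hF hpX
  rw [ErF, le_csInf_iff]
  · exact ⟨fun h q hq => h _ ⟨q, hq, rfl⟩, fun h _ ⟨q, hq, hv⟩ => hv ▸ h q hq⟩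
  · refine ⟨c, ?_⟩
    rintro _ ⟨q, hq, rfl⟩
    exact hc q W hq hW
  · exact ⟨_, W, hW, rfl⟩

lemma le_ErFW_iff (hF : Monotone F) (hpX : IsPMF pX) {𝒲 : Set (𝒳 → 𝒴 → ℝ)}
    (h𝒲ne : 𝒲.Nonempty) (h𝒲ch : ∀ p ∈ 𝒲, IsChannel p) {α : ℝ} :
    α ≤ ErFW F R pX 𝒲 ↔
      ∀ p ∈ 𝒲, ∀ q, IsChannel q → α ≤ condKL pX q p + F (mutInfo pX q - R) := by
  obtain ⟨c, hc⟩ := exists_le_condKL_add (𝒴 := 𝒴) (R := R) hF hpX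
  obtain ⟨p₀, hp₀⟩ := h𝒲ne
  rw [ErFW, le_csInf_iff]
  · exact ⟨fun h p hp => (le_ErF_iff hF hpX (h𝒲ch p hp)).1 (h _ ⟨p, hp, rfl⟩),
      fun h _ ⟨p, hp, hv⟩ => hv ▸ (le_ErF_iff hF hpX (h𝒲ch p hp)).2 (h p hp)⟩
  · refine ⟨c, ?_⟩
    rintro _ ⟨p, hp, rfl⟩
    exact (le_ErF_iff hF hpX (h𝒲ch p hp)).2 fun q hq => hc q p hq (h𝒲ch p hp)
  · exact ⟨_, p₀, hp₀, rfl⟩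

lemma le_EspEW_iff {𝒲 : Set (𝒳 → 𝒴 → ℝ)} {β : EReal} :
    β ≤ EspEW R pX 𝒲 ↔
      ∀ p ∈ 𝒲, ∀ q, IsChannel q → mutInfo pX q ≤ R → β ≤ condKL pX q p := by
  refine ⟨fun h p hp q hq hI => ?_, fun h => le_sInf ?_⟩
  · calc β ≤ EspEW R pX 𝒲 := h
      _ ≤ EspE R pX p := sInf_le ⟨p, hp, rfl⟩
      _ ≤ condKL pX q p := sInf_le ⟨q, hq, hI, rfl⟩
  rintro _ ⟨p, hp, rfl⟩
  refine le_sInf ?_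
  rintro _ ⟨q, hq, hI, rfl⟩
  exact h p hp q hq hI

end

theorem feasible_iff_dominates_FLstar_general {𝒳 𝒴 : Type*} [Fintype 𝒳] [Fintype 𝒴]
    (pX : 𝒳 → ℝ) (hpX : IsPMF pX)
    (𝒲 : Set (𝒳 → 𝒴 → ℝ)) (h𝒲ne : 𝒲.Nonempty)
    (h𝒲ch : ∀ p ∈ 𝒲, IsChannel p) (R α : ℝ)
    (F : ℝ → ℝ) (hFmono : Monotone F) :
    α ≤ ErFW F R pX 𝒲 ↔
      ∀ t : ℝ, (α : EReal) - EspEW (R + t) pX 𝒲 ≤ (F t : EReal) := by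
  simp only [le_ErFW_iff hFmono hpX h𝒲ne h𝒲ch, EReal.coe_sub_le_coe_iff, le_EspEW_iff,
    EReal.coe_le_coe_iff]
  constructor
  · intro h t p hp q hq hI
    have := hFmono (show mutInfo pX q - R ≤ t by linarith)
    linarith [h p hp q hq]
  · intro h p hp q hq
    linarith [h (mutInfo pX q - R) p hp q hq (by linarith)]

/-- With `F^{L*}(t) = α - E_sp(R+t,pX,𝒲)` (equal to `-∞` when the
sphere-packing exponent is `+∞`), a continuous nondecreasing `F : ℝ → ℝ` satisfies
`E_{r,F}(R,pX,𝒲) ≥ α` if and only if `F` dominates `F^{L*}` pointwise. -/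
theorem feasible_iff_dominates_FLstar {𝒳 𝒴 : Type*} [Fintype 𝒳] [Fintype 𝒴]
    (pX : 𝒳 → ℝ) (hpX : IsPMF pX)
    (𝒲 : Set (𝒳 → 𝒴 → ℝ)) (h𝒲ne : 𝒲.Nonempty) (h𝒲cpt : IsCompact 𝒲)
    (h𝒲ch : ∀ p ∈ 𝒲, IsChannel p) (R α : ℝ)
    (F : ℝ → ℝ) (hFcont : Continuous F) (hFmono : Monotone F) :
    α ≤ ErFW F R pX 𝒲 ↔
      ∀ t : ℝ, (α : EReal) - EspEW (R + t) pX 𝒲 ≤ (F t : EReal) :=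
  feasible_iff_dominates_FLstar_general pX hpX 𝒲 h𝒲ne h𝒲ch R α F hFmono
end

section
/- Let W be a nonempty compact set of channels, p_X an input pmf, and α : W → ℝ a bounded continuous function. Define the relative exponents Δ_α E_{r,F}(R, p_X, W) = inf_{p∈W} [E_{r,F}(R, p_X, p) − α(p)] and Δ_α E_sp(R, p_X, W) = inf_{p∈W} [E_sp(R, p_X, p) − α(p)]. Then for every continuous nondecreasing F : ℝ → ℝ and every rate R ∈ ℝ, Δ_α E_{r,F}(R, p_X, W) = inf_{R' ∈ ℝ} [ Δ_α E_sp(R', p_X, W) + F(R' − R) ]. -/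
open scoped BigOperators

/-! For a single channel, `E_{r,F}(R) = inf_{R'} [E_sp(R') + F(R' - R)]`: a test channel `q` with
`I(q) ≤ R'` costs at most `D(q) + F(R' - R)` because `F` is nondecreasing, and the rate
`R' = I(q)` recovers `D(q) + F(I(q) - R)`. The relative identity then follows by exchanging the
infima over channels and rates, since adding a real constant is an order isomorphism of `EReal`.
Divergence and mutual information are bounded below uniformly, so the real infima involved are
genuine infima and not junk values. -/

open Set

lemma neg_two_le_mul_logb_div {t w : ℝ} (ht : 0 ≤ t) (hw0 : 0 ≤ w) (hw1 : w ≤ 1) :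
    -2 ≤ t * Real.logb 2 (t / w) := by
  rcases hw0.eq_or_lt with rfl | hw
  · simp -- `t / 0 = 0` and `logb 2 0 = 0`
  rcases ht.eq_or_lt with rfl | htpos
  · simp
  have hlog_div : Real.log t ≤ Real.log (t / w) :=
    Real.log_le_log htpos (le_div_self ht hw hw1)
  have hlog2 : 1 / 2 < Real.log 2 := by linarith [Real.log_two_gt_d9]
  have hmul_log : -1 ≤ t * Real.log (t / w) := by
    nlinarith [Real.self_sub_one_le_mul_log ht, mul_le_mul_of_nonneg_left hlog_div ht]
  rw [Real.logb, mul_div_assoc', le_div_iff₀ (by linarith)]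
  linarith

lemma setOf_exists_and_eq {α β : Type*} (P : α → Prop) (f : α → β) :
    {v | ∃ a, P a ∧ v = f a} = f '' {a | P a} := by
  ext; simp [eq_comm]

lemma sInf_setOf_exists_and_eq {α β : Type*} [CompleteLattice β] (P : α → Prop) (f : α → β) :
    sInf {v | ∃ a, P a ∧ v = f a} = ⨅ (a) (_ : P a), f a := by
  rw [setOf_exists_and_eq, sInf_image]
  rfl

namespace EReal

lemma coe_sInf_setOf_exists_and_eq {α : Type*} {P : α → Prop} {f : α → ℝ} (hne : ∃ a, P a)
    {b : ℝ} (hb : ∀ a, P a → b ≤ f a) :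
    ((sInf {v | ∃ a, P a ∧ v = f a} : ℝ) : EReal) = ⨅ (a) (_ : P a), (f a : EReal) := by
  obtain ⟨a, ha⟩ := hne
  have hbdd : BddBelow (f '' {a | P a}) := ⟨b, by rintro _ ⟨a, ha, rfl⟩; exact hb a ha⟩
  have hne_image : (f '' {a | P a}).Nonempty := ⟨f a, a, ha, rfl⟩
  rw [setOf_exists_and_eq, Monotone.map_csInf_of_continuousAt
    continuous_coe_real_ereal.continuousAt coe_strictMono.monotone hne_image hbdd, ← image_comp,
    sInf_image]
  rfl

noncomputable def addCoeOrderIso (c : ℝ) : EReal ≃o EReal where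
  toFun x := x + c
  invFun x := x - c
  left_inv _ := add_sub_cancel_right
  right_inv _ := sub_add_cancel
  map_rel_iff' := (addLECancellable_coe c).add_le_add_iff_right

lemma iInf_add_coe {ι : Sort*} (f : ι → EReal) (c : ℝ) : (⨅ i, f i) + c = ⨅ i, (f i + c) :=
  (addCoeOrderIso c).map_iInf f

lemma iInf_sub_coe {ι : Sort*} (f : ι → EReal) (c : ℝ) : (⨅ i, f i) - c = ⨅ i, (f i - c) := by
  simp only [sub_eq_add_neg, ← coe_neg, iInf_add_coe]

end EReal

section Channels

variable {𝒳 𝒴 : Type*} [Fintype 𝒳] [Fintype 𝒴] {pX : 𝒳 → ℝ}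

lemma IsPMF.le_one_s15 {p : 𝒳 → ℝ} (h : IsPMF p) (x : 𝒳) : p x ≤ 1 :=
  h.2 ▸ Finset.single_le_sum (fun i _ => h.1 i) (Finset.mem_univ x)

lemma neg_two_mul_card_le_sum_mul_logb_div (hpX : IsPMF pX) {q r : 𝒳 → 𝒴 → ℝ}
    (hq : ∀ x y, 0 ≤ q x y) (hr0 : ∀ x y, 0 ≤ r x y) (hr1 : ∀ x y, r x y ≤ 1) :
    -(2 * Fintype.card 𝒴) ≤ ∑ x, ∑ y, pX x * q x y * Real.logb 2 (q x y / r x y) := by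
  calc -(2 * Fintype.card 𝒴 : ℝ) = ∑ x, pX x * ∑ _y : 𝒴, (-2 : ℝ) := by
        simp [← Finset.sum_mul, hpX.2, mul_comm]
    _ ≤ ∑ x, ∑ y, pX x * q x y * Real.logb 2 (q x y / r x y) := by
        refine Finset.sum_le_sum fun x _ => ?_
        rw [Finset.mul_sum]
        refine Finset.sum_le_sum fun y _ => ?_
        rw [mul_assoc]
        exact mul_le_mul_of_nonneg_left
          (neg_two_le_mul_logb_div (hq x y) (hr0 x y) (hr1 x y)) (hpX.1 x)

lemma neg_two_mul_card_le_condKL (hpX : IsPMF pX) {q W : 𝒳 → 𝒴 → ℝ} (hq : IsChannel q)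
    (hW : IsChannel W) : -(2 * Fintype.card 𝒴) ≤ condKL pX q W :=
  neg_two_mul_card_le_sum_mul_logb_div hpX (fun x y => (hq x).1 y) (fun x y => (hW x).1 y)
    (fun x y => (hW x).le_one_s15 y)

lemma neg_two_mul_card_le_mutInfo (hpX : IsPMF pX) {q : 𝒳 → 𝒴 → ℝ} (hq : IsChannel q) :
    -(2 * Fintype.card 𝒴) ≤ mutInfo pX q := by
  refine neg_two_mul_card_le_sum_mul_logb_div hpX (fun x y => (hq x).1 y)
    (fun _ y => Finset.sum_nonneg fun x _ => mul_nonneg (hpX.1 x) ((hq x).1 y)) fun _ y => ?_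
  calc ∑ x, pX x * q x y ≤ ∑ x, pX x :=
        Finset.sum_le_sum fun x _ => mul_le_of_le_one_right (hpX.1 x) ((hq x).le_one_s15 y)
    _ = 1 := hpX.2

lemma le_condKL_add_comp_mutInfo_sub (hpX : IsPMF pX) {F : ℝ → ℝ} (hF : Monotone F) (R : ℝ)
    {q W : 𝒳 → 𝒴 → ℝ} (hq : IsChannel q) (hW : IsChannel W) :
    -(2 * Fintype.card 𝒴) + F (-(2 * Fintype.card 𝒴) - R) ≤
      condKL pX q W + F (mutInfo pX q - R) :=
  add_le_add (neg_two_mul_card_le_condKL hpX hq hW)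
    (hF (sub_le_sub_right (neg_two_mul_card_le_mutInfo hpX hq) R))

lemma le_ErF (hpX : IsPMF pX) {F : ℝ → ℝ} (hF : Monotone F) (R : ℝ) {W : 𝒳 → 𝒴 → ℝ}
    (hW : IsChannel W) :
    -(2 * Fintype.card 𝒴) + F (-(2 * Fintype.card 𝒴) - R) ≤ ErF F R pX W :=
  le_csInf ⟨_, W, hW, rfl⟩ fun _ ⟨_, hq, hv⟩ => hv ▸ le_condKL_add_comp_mutInfo_sub hpX hF R hq hW

theorem ErF_eq_iInf_EspE_add (hpX : IsPMF pX) {F : ℝ → ℝ} (hF : Monotone F) (R : ℝ)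
    {W : 𝒳 → 𝒴 → ℝ} (hW : IsChannel W) :
    (ErF F R pX W : EReal) = ⨅ R' : ℝ, EspE R' pX W + F (R' - R) := by
  have hEsp : ∀ R', EspE R' pX W =
      ⨅ (q) (_ : IsChannel q ∧ mutInfo pX q ≤ R'), (condKL pX q W : EReal) := fun R' => by
    rw [← sInf_setOf_exists_and_eq, EspE]
    simp only [and_assoc]
  rw [ErF, EReal.coe_sInf_setOf_exists_and_eq ⟨W, hW⟩
    fun q hq => le_condKL_add_comp_mutInfo_sub hpX hF R hq hW]
  simp only [hEsp, EReal.iInf_add_coe, ← EReal.coe_add]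
  apply le_antisymm
  · refine le_iInf fun R' => le_iInf₂ fun q ⟨hq, hqR'⟩ => (iInf₂_le q hq).trans ?_
    exact EReal.coe_le_coe_iff.2 (add_le_add_right (hF (sub_le_sub_right hqR' R)) _)
  · exact le_iInf₂ fun q hq => (iInf_le _ (mutInfo pX q)).trans (iInf₂_le q ⟨hq, le_rfl⟩)

end Channels

theorem relative_ErF_eq_inf_relative_Esp_general {𝒳 𝒴 : Type*} [Fintype 𝒳] [Fintype 𝒴]
    (pX : 𝒳 → ℝ) (hpX : IsPMF pX)
    (𝒲 : Set (𝒳 → 𝒴 → ℝ)) (h𝒲ne : 𝒲.Nonempty)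
    (h𝒲ch : ∀ p ∈ 𝒲, IsChannel p)
    (α : (𝒳 → 𝒴 → ℝ) → ℝ)
    (hαbdd : ∃ C : ℝ, ∀ p ∈ 𝒲, |α p| ≤ C)
    (F : ℝ → ℝ) (hFmono : Monotone F) (R : ℝ) :
    ((sInf {v : ℝ | ∃ p ∈ 𝒲, v = ErF F R pX p - α p} : ℝ) : EReal)
      = ⨅ R' : ℝ,
          (sInf {v : EReal | ∃ p ∈ 𝒲, v = EspE R' pX p - (α p : EReal)}
            + (F (R' - R) : EReal)) := by
  obtain ⟨C, hC⟩ := hαbdd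
  have hbdd : ∀ p ∈ 𝒲, -(2 * Fintype.card 𝒴) + F (-(2 * Fintype.card 𝒴) - R) - C ≤
      ErF F R pX p - α p := fun p hp =>
    sub_le_sub (le_ErF hpX hFmono R (h𝒲ch p hp)) (abs_le.1 (hC p hp)).2
  calc ((sInf {v : ℝ | ∃ p ∈ 𝒲, v = ErF F R pX p - α p} : ℝ) : EReal)
      = ⨅ p ∈ 𝒲, ⨅ R' : ℝ, EspE R' pX p + F (R' - R) - α p := by
        rw [EReal.coe_sInf_setOf_exists_and_eq h𝒲ne hbdd]
        refine iInf_congr fun p => iInf_congr fun hp => ?_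
        rw [EReal.coe_sub, ErF_eq_iInf_EspE_add hpX hFmono R (h𝒲ch p hp), EReal.iInf_sub_coe]
    _ = ⨅ R' : ℝ, ⨅ p ∈ 𝒲, EspE R' pX p - α p + F (R' - R) := by
        simp only [sub_eq_add_neg, add_right_comm _ (F _ : EReal)]
        exact (iInf_congr fun _ => iInf_comm).trans iInf_comm
    _ = _ := by
        simp only [sInf_setOf_exists_and_eq, EReal.iInf_add_coe]

/-- For bounded continuous `α : 𝒲 → ℝ`, the relative exponents
`Δ_α E_{r,F}(R,pX,𝒲) = inf_{p∈𝒲} [E_{r,F}(R,pX,p) - α(p)]` and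
`Δ_α E_sp(R,pX,𝒲) = inf_{p∈𝒲} [E_sp(R,pX,p) - α(p)]` satisfy, for every continuous
nondecreasing `F` and every `R`,
`Δ_α E_{r,F}(R,pX,𝒲) = inf_{R'} [Δ_α E_sp(R',pX,𝒲) + F(R'-R)]`. -/
theorem relative_ErF_eq_inf_relative_Esp {𝒳 𝒴 : Type*} [Fintype 𝒳] [Fintype 𝒴]
    (pX : 𝒳 → ℝ) (hpX : IsPMF pX)
    (𝒲 : Set (𝒳 → 𝒴 → ℝ)) (h𝒲ne : 𝒲.Nonempty) (h𝒲cpt : IsCompact 𝒲)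
    (h𝒲ch : ∀ p ∈ 𝒲, IsChannel p)
    (α : (𝒳 → 𝒴 → ℝ) → ℝ) (hαcont : ContinuousOn α 𝒲)
    (hαbdd : ∃ C : ℝ, ∀ p ∈ 𝒲, |α p| ≤ C)
    (F : ℝ → ℝ) (hFcont : Continuous F) (hFmono : Monotone F) (R : ℝ) :
    ((sInf {v : ℝ | ∃ p ∈ 𝒲, v = ErF F R pX p - α p} : ℝ) : EReal)
      = ⨅ R' : ℝ,
          (sInf {v : EReal | ∃ p ∈ 𝒲, v = EspE R' pX p - (α p : EReal)}
            + (F (R' - R) : EReal)) :=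
  relative_ErF_eq_inf_relative_Esp_general pX hpX 𝒲 h𝒲ne h𝒲ch α hαbdd F hFmono R
end
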